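/- arXiv:2507.22701 — 3 statements merged into one kernel-verified Lean document; each statement's English description precedes it below -/
import Mathlib

section
/- If a sequence of nonnegative reals (Δ_t) satisfies the recursion Δ_t ≤ (1-β)·Δ_{t-1} + β·G·η_t for all t ≥ 1, where β ∈ (0,1), G ≥ 0, and η_t = η₀/t, then there exists a constant C > 0 (depending on β, G, η₀, Δ₀) such that the cumulative variation satisfies ∑_{t=1}^{T} Δ_t ≤ C·(1 + log T) for all T ≥ 1. -/
/-!
Summing the recursion over `t = 1, …, T` telescopes to
`β ∑ Δ_t + (1 - β) Δ_T ≤ (1 - β) Δ_0 + β G η₀ H_T`, with `H_T` the harmonic number.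
Since `Δ_T ≥ 0` and `H_T ≤ 1 + log T`, this gives `∑ Δ_t ≤ (Δ_0 / β + G η₀) (1 + log T)`.
-/

open Finset Real

theorem sum_Icc_inv_le_one_add_log (T : ℕ) :
    ∑ t ∈ Icc 1 T, (t : ℝ)⁻¹ ≤ 1 + log T := by
  have h := harmonic_le_one_add_log T
  rw [harmonic_eq_sum_Icc] at h
  push_cast at h
  exact h

theorem mul_sum_Icc_add_le_of_le_one_sub_mul {β : ℝ} {Δ b : ℕ → ℝ}
    (hrec : ∀ t : ℕ, 1 ≤ t → Δ t ≤ (1 - β) * Δ (t - 1) + b t) (T : ℕ) :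
    β * ∑ t ∈ Icc 1 T, Δ t + (1 - β) * Δ T ≤ (1 - β) * Δ 0 + ∑ t ∈ Icc 1 T, b t := by
  induction T with
  | zero => simp
  | succ n ih =>
    have hstep := hrec (n + 1) (Nat.le_add_left 1 n)
    rw [Nat.add_sub_cancel] at hstep
    rw [sum_Icc_succ_top (Nat.le_add_left 1 n), sum_Icc_succ_top (Nat.le_add_left 1 n)]
    linarith

theorem stmt_0_general (β G η₀ : ℝ) (hβ : β ∈ Set.Ioo (0:ℝ) 1) (hG : 0 ≤ G)
    (hη₀ : 0 < η₀)
    (Δ : ℕ → ℝ) (hnonneg : ∀ t, 0 ≤ Δ t)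
    (hrec : ∀ t : ℕ, 1 ≤ t → Δ t ≤ (1 - β) * Δ (t - 1) + β * G * (η₀ / t)) :
    ∃ C : ℝ, 0 < C ∧ ∀ T : ℕ, 1 ≤ T →
      ∑ t ∈ Finset.Icc 1 T, Δ t ≤ C * (1 + Real.log T) := by
  obtain ⟨hβ0, hβ1⟩ := hβ
  have hGη₀ : 0 ≤ G * η₀ := mul_nonneg hG hη₀.le
  have hC : 0 ≤ Δ 0 / β + G * η₀ := add_nonneg (div_nonneg (hnonneg 0) hβ0.le) hGη₀
  refine ⟨Δ 0 / β + G * η₀ + 1, by linarith, fun T hT => ?_⟩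
  have hlog : 0 ≤ log T := log_nonneg (by exact_mod_cast hT)
  have hsum := mul_sum_Icc_add_le_of_le_one_sub_mul hrec T
  have hharm : ∑ t ∈ Icc 1 T, β * G * (η₀ / t) ≤ β * (G * η₀) * (1 + log T) := by
    simp_rw [div_eq_mul_inv, ← mul_assoc, ← mul_sum, mul_assoc β G η₀]
    exact mul_le_mul_of_nonneg_left (sum_Icc_inv_le_one_add_log T) (mul_nonneg hβ0.le hGη₀)
  have hbound : β * ∑ t ∈ Icc 1 T, Δ t ≤ β * ((Δ 0 / β + G * η₀) * (1 + log T)) := by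
    have hΔ0 : (1 - β) * Δ 0 ≤ Δ 0 * (1 + log T) := by nlinarith [hnonneg 0]
    have hΔT : 0 ≤ (1 - β) * Δ T := mul_nonneg (by linarith) (hnonneg T)
    field_simp
    linarith
  calc ∑ t ∈ Icc 1 T, Δ t ≤ (Δ 0 / β + G * η₀) * (1 + log T) :=
        le_of_mul_le_mul_left hbound hβ0
    _ ≤ (Δ 0 / β + G * η₀ + 1) * (1 + log T) :=
        mul_le_mul_of_nonneg_right (by linarith) (by linarith)

theorem stmt_0 (β G η₀ Δ₀ : ℝ) (hβ : β ∈ Set.Ioo (0:ℝ) 1) (hG : 0 ≤ G)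
    (hη₀ : 0 < η₀) (hΔ₀ : 0 ≤ Δ₀)
    (Δ : ℕ → ℝ) (hΔ0 : Δ 0 = Δ₀) (hnonneg : ∀ t, 0 ≤ Δ t)
    (hrec : ∀ t : ℕ, 1 ≤ t → Δ t ≤ (1 - β) * Δ (t - 1) + β * G * (η₀ / t)) :
    ∃ C : ℝ, 0 < C ∧ ∀ T : ℕ, 1 ≤ T →
      ∑ t ∈ Finset.Icc 1 T, Δ t ≤ C * (1 + Real.log T) :=
  stmt_0_general β G η₀ hβ hG hη₀ Δ hnonneg hrec
end

section
/- If a sequence of nonnegative reals (Δ_t) satisfies Δ_t ≤ (1-β)·Δ_{t-1} + β·G·η₀/t for all t ≥ 1 with β ∈ (0,1), then Δ_t = O(1/t); that is, there exists C > 0 such that Δ_t ≤ C/t for all t ≥ 1. -/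
/-!
The weighted sequence `t * Δ t` is bounded. Multiplying the recursion by `t + 1` gives
`(t + 1) Δ (t + 1) ≤ (1 - β) (1 + 1/t) · t Δ t + β G η₀`, and once `β t ≥ 2` the factor
`(1 - β)(1 + 1/t)` is at most `1 - β/2`, so the bound `t Δ t ≤ C` propagates for every
`C ≥ 2 G η₀`. Finitely many earlier terms do not affect boundedness.
-/

open Filter Set

theorem succ_mul_le_of_damped_step {β c C t x y : ℝ} (hβ0 : 0 ≤ β) (hβ1 : β ≤ 1)
    (ht : 2 ≤ β * t) (hC : 0 ≤ C) (hc : 2 * c ≤ C) (hx : t * x ≤ C)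
    (hy : y ≤ (1 - β) * x + β * c / (t + 1)) : (t + 1) * y ≤ C := by
  have ht0 : 0 < t := by nlinarith
  have hmul : (t + 1) * y ≤ (1 - β) * (t + 1) * x + β * c := by
    have := mul_le_mul_of_nonneg_left hy (by linarith : 0 ≤ t + 1)
    rwa [mul_add, mul_div_cancel₀ _ (by linarith : t + 1 ≠ 0), ← mul_assoc,
      mul_comm (t + 1) (1 - β)] at this
  have key : t * ((1 - β) * (t + 1) * x + β * c) ≤ t * C := by
    have hx' : (1 - β) * (t + 1) * (t * x) ≤ (1 - β) * (t + 1) * C :=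
      mul_le_mul_of_nonneg_left hx (by nlinarith)
    nlinarith [mul_nonneg hC hβ0, mul_nonneg (sub_nonneg.2 hc) (by linarith : 0 ≤ β * t),
      mul_nonneg hC (sub_nonneg.2 ht)]
  linarith [le_of_mul_le_mul_left key ht0]

theorem mul_le_of_damped_recursion {β c C : ℝ} {Δ : ℕ → ℝ} (hβ0 : 0 ≤ β) (hβ1 : β ≤ 1)
    (hrec : ∀ t : ℕ, 1 ≤ t → Δ t ≤ (1 - β) * Δ (t - 1) + β * c / t)
    {N : ℕ} (hN : 2 ≤ β * N) (hC : 0 ≤ C) (hc : 2 * c ≤ C) (hCN : N * Δ N ≤ C) :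
    ∀ t, N ≤ t → t * Δ t ≤ C := by
  intro t ht
  induction t, ht using Nat.le_induction with
  | base => exact hCN
  | succ t ht ih =>
    have hstep := hrec (t + 1) (Nat.le_add_left 1 t)
    rw [Nat.add_sub_cancel] at hstep
    push_cast at hstep ⊢
    have htN : β * N ≤ β * t := mul_le_mul_of_nonneg_left (by exact_mod_cast ht) hβ0
    exact succ_mul_le_of_damped_step hβ0 hβ1 (hN.trans htN) hC hc ih hstep

theorem bddAbove_mul_of_damped_recursion {β c : ℝ} {Δ : ℕ → ℝ} (hβ : β ∈ Ioo (0 : ℝ) 1)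
    (hrec : ∀ t : ℕ, 1 ≤ t → Δ t ≤ (1 - β) * Δ (t - 1) + β * c / t) :
    BddAbove (range fun t : ℕ => (t : ℝ) * Δ t) := by
  obtain ⟨N, hN⟩ := exists_nat_ge (2 / β)
  have hβN : 2 ≤ β * N := by rwa [div_le_iff₀ hβ.1, mul_comm] at hN
  refine IsBoundedUnder.bddAbove_range
    (isBoundedUnder_of_eventually_le (a := max 0 (max (2 * c) (N * Δ N))) ?_)
  exact eventually_atTop.2 ⟨N, mul_le_of_damped_recursion hβ.1.le hβ.2.le hrec hβN
    (le_max_left 0 _) ((le_max_left _ _).trans (le_max_right _ _))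
    ((le_max_right _ _).trans (le_max_right _ _))⟩

theorem stmt_1_general (β G η₀ : ℝ) (hβ : β ∈ Set.Ioo (0:ℝ) 1)
    (Δ : ℕ → ℝ)
    (hrec : ∀ t : ℕ, 1 ≤ t → Δ t ≤ (1 - β) * Δ (t - 1) + β * G * η₀ / t) :
    ∃ C : ℝ, 0 < C ∧ ∀ t : ℕ, 1 ≤ t → Δ t ≤ C / t := by
  obtain ⟨C, hC⟩ := bddAbove_mul_of_damped_recursion (c := G * η₀) hβ
    (by simpa only [mul_assoc] using hrec)
  refine ⟨max C 1, by positivity, fun t ht => ?_⟩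
  rw [le_div_iff₀ (by exact_mod_cast ht), mul_comm]
  exact (hC (mem_range_self t)).trans (le_max_left _ _)

theorem stmt_1 (β G η₀ Δ₀ : ℝ) (hβ : β ∈ Set.Ioo (0:ℝ) 1) (hG : 0 ≤ G)
    (hη₀ : 0 < η₀) (hΔ₀ : 0 ≤ Δ₀)
    (Δ : ℕ → ℝ) (hΔ0 : Δ 0 = Δ₀) (hnonneg : ∀ t, 0 ≤ Δ t)
    (hrec : ∀ t : ℕ, 1 ≤ t → Δ t ≤ (1 - β) * Δ (t - 1) + β * G * η₀ / t) :
    ∃ C : ℝ, 0 < C ∧ ∀ t : ℕ, 1 ≤ t → Δ t ≤ C / t :=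
  stmt_1_general β G η₀ hβ Δ hrec
end

section
/- Suppose f : [0,C] → ℝ satisfies the α-approximate concavity condition: f(λx + (1−λ)y) ≥ α·(λf(x) + (1−λ)f(y)) for all x, y ∈ [0,C], λ ∈ [0,1], with α ∈ (0,1] and f ≥ 0. Then f is bounded below by α times its concave envelope: for every x and every finite convex combination x = ∑_j λ_j x_j with λ_j ≥ 0, ∑_j λ_j = 1, one has f(x) ≥ α·∑_j λ_j f(x_j). -/
/-!
Approximate concavity is applied only once, to a chord. In dimension one the point
`(x₀, y₀) = ∑ wⱼ (xⱼ, yⱼ)` lies below a chord joining two of the points `(xⱼ, yⱼ)`: otherwise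
every chord over `x₀` passes strictly below `y₀`, so the slopes from `(x₀, y₀)` to the points on
its right are all smaller than those to the points on its left; a slope in between gives a line
through `(x₀, y₀)` strictly above every point, and averaging against the weights yields `y₀ < y₀`.
Inducting on the number of points instead would lose a factor `α` at each step.
-/

open Finset

theorem chordWeight_mem_Icc {a b c : ℝ} (hab : a < b) (hbc : b < c) :
    (c - b) / (c - a) ∈ Set.Icc (0 : ℝ) 1 :=
  ⟨div_nonneg (by linarith) (by linarith), (div_le_one (by linarith)).2 (by linarith)⟩

theorem chordWeight_mul_add_eq {a b c : ℝ} (hab : a < b) (hbc : b < c) :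
    (c - b) / (c - a) * a + (1 - (c - b) / (c - a)) * c = b := by
  have : c - a ≠ 0 := by linarith
  field_simp
  ring

theorem slope_lt_slope_of_chord_lt {a b c ya yb yc : ℝ} (hab : a < b) (hbc : b < c)
    (h : (c - b) / (c - a) * ya + (1 - (c - b) / (c - a)) * yc < yb) :
    (yc - yb) / (c - b) < (yb - ya) / (b - a) := by
  have hac : 0 < c - a := by linarith
  rw [div_lt_div_iff₀ (by linarith) (by linarith)]
  have h' := (mul_lt_mul_iff_of_pos_right hac).2 h
  field_simp at h'
  linarith

section WeightedMean

variable {ι : Type*} [Fintype ι] {w : ι → ℝ}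

theorem exists_line_through_mean_le (hw0 : ∀ j, 0 ≤ w j) (hw1 : ∑ j, w j = 1)
    (x y : ι → ℝ) (s : ℝ) :
    ∃ j, ∑ i, w i * y i + s * (x j - ∑ i, w i * x i) ≤ y j := by
  by_contra! hbelow
  set x₀ := ∑ i, w i * x i
  set y₀ := ∑ i, w i * y i
  obtain ⟨j, -, hj⟩ := exists_lt_of_sum_lt (s := univ) (f := fun _ => (0 : ℝ)) (g := w)
    (by simp [hw1])
  have hpos : 0 < ∑ i, w i * (y₀ + s * (x i - x₀) - y i) :=
    sum_pos' (fun i _ => mul_nonneg (hw0 i) (sub_pos.2 (hbelow i)).le)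
      ⟨j, mem_univ j, mul_pos hj (sub_pos.2 (hbelow j))⟩
  have hzero : ∑ i, w i * (y₀ + s * (x i - x₀) - y i) = 0 := by
    simp only [mul_sub, mul_add, sum_sub_distrib, sum_add_distrib, ← sum_mul, hw1,
      mul_left_comm _ s, ← mul_sum]
    ring
  exact hpos.ne' hzero

theorem exists_chord_ge_weightedMean (hw0 : ∀ j, 0 ≤ w j) (hw1 : ∑ j, w j = 1)
    (x y : ι → ℝ) :
    ∃ i k, ∃ t ∈ Set.Icc (0 : ℝ) 1, t * x i + (1 - t) * x k = ∑ j, w j * x j ∧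
      ∑ j, w j * y j ≤ t * y i + (1 - t) * y k := by
  by_contra! hchord
  set x₀ := ∑ i, w i * x i
  set y₀ := ∑ i, w i * y i
  have hmean : ∀ j, x j = x₀ → y j < y₀ := fun j hj => by
    simpa using hchord j j 1 (by simp) (by simp [hj])
  have hcross : ∀ i k, x i < x₀ → x₀ < x k →
      (y k - y₀) / (x k - x₀) < (y₀ - y i) / (x₀ - x i) := fun i k hi hk =>
    slope_lt_slope_of_chord_lt hi hk
      (hchord i k _ (chordWeight_mem_Icc hi hk) (chordWeight_mul_add_eq hi hk))
  obtain ⟨s, hright, hleft⟩ := exists_between'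
    ((univ.filter fun k => x₀ < x k).image fun k => (y k - y₀) / (x k - x₀))
    ((univ.filter fun i => x i < x₀).image fun i => (y₀ - y i) / (x₀ - x i))
    (by simp only [mem_image, mem_filter, mem_univ, true_and]
        rintro _ ⟨k, hk, rfl⟩ _ ⟨i, hi, rfl⟩
        exact hcross i k hi hk)
  obtain ⟨j, hj⟩ := exists_line_through_mean_le hw0 hw1 x y s
  rcases lt_trichotomy (x j) x₀ with hlt | heq | hgt
  · have := hleft _ (mem_image_of_mem _ (mem_filter.2 ⟨mem_univ j, hlt⟩))
    rw [lt_div_iff₀ (by linarith)] at this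
    linarith
  · have := hmean j heq
    rw [heq, sub_self, mul_zero, add_zero] at hj
    linarith
  · have := hright _ (mem_image_of_mem _ (mem_filter.2 ⟨mem_univ j, hgt⟩))
    rw [div_lt_iff₀ (by linarith)] at this
    linarith

end WeightedMean

theorem stmt_11_general (C α : ℝ) (hα : α ∈ Set.Ioc (0:ℝ) 1)
    (f : ℝ → ℝ)
    (happrox : ∀ x ∈ Set.Icc (0:ℝ) C, ∀ y ∈ Set.Icc (0:ℝ) C, ∀ l ∈ Set.Icc (0:ℝ) 1,
      f (l * x + (1 - l) * y) ≥ α * (l * f x + (1 - l) * f y)) :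
    ∀ (m : ℕ) (lam : Fin m → ℝ) (xs : Fin m → ℝ),
      (∀ j, 0 ≤ lam j) → ∑ j, lam j = 1 → (∀ j, xs j ∈ Set.Icc (0:ℝ) C) →
      f (∑ j, lam j * xs j) ≥ α * ∑ j, lam j * f (xs j) := by
  intro m lam xs hlam0 hlam1 hxs
  obtain ⟨i, k, t, ht, hx, hy⟩ := exists_chord_ge_weightedMean hlam0 hlam1 xs (f ∘ xs)
  calc α * ∑ j, lam j * f (xs j)
      ≤ α * (t * f (xs i) + (1 - t) * f (xs k)) := mul_le_mul_of_nonneg_left hy hα.1.le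
    _ ≤ f (∑ j, lam j * xs j) := hx ▸ happrox _ (hxs i) _ (hxs k) t ht

theorem stmt_11 (C α : ℝ) (hC : 0 < C) (hα : α ∈ Set.Ioc (0:ℝ) 1)
    (f : ℝ → ℝ) (hf0 : ∀ x ∈ Set.Icc (0:ℝ) C, 0 ≤ f x)
    (happrox : ∀ x ∈ Set.Icc (0:ℝ) C, ∀ y ∈ Set.Icc (0:ℝ) C, ∀ l ∈ Set.Icc (0:ℝ) 1,
      f (l * x + (1 - l) * y) ≥ α * (l * f x + (1 - l) * f y)) :
    ∀ (m : ℕ) (lam : Fin m → ℝ) (xs : Fin m → ℝ),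
      (∀ j, 0 ≤ lam j) → ∑ j, lam j = 1 → (∀ j, xs j ∈ Set.Icc (0:ℝ) C) →
      f (∑ j, lam j * xs j) ≥ α * ∑ j, lam j * f (xs j) :=
  stmt_11_general C α hα f happrox
end
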